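/- arXiv:2505.09022 — 2 statements merged into one kernel-verified Lean document; each statement's English description precedes it below -/
import Mathlib

section
/- Quadratic representation of the final output of a single-layer S6 unit on embedded scalar inputs: Fix a constant Δ > 0 and force all sampling intervals of the S6 unit to equal Δ, and let M ∈ ℝ^d be an encoder with entries m^{(i)}. Then, with Ā = exp(ΔA), P̄ = A^{-1}(Ā − I) B M ∈ ℝ^{n×1}, and Q̄ = M^⊤ C ∈ ℝ^{1×n}, the i-th entry of the final output of the S6 unit applied to the embedded sequence (u_1 M, …, u_L M) equals Γ_S6((u_1 M, …, u_L M))_L^{(i)} = m^{(i)} · u_L · Σ_{j=1}^L Q̄ Ā^{L−j} P̄ u_j², for every scalar sequence (u_1, …, u_L) ∈ ℝ^L and every 1 ≤ i ≤ d. In particular, on sequences with u_L = 1, every channel of the final output equals m^{(i)} times one common quadratic polynomial of (u_1, …, u_L) that does not depend on i. -/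
open Matrix Filter Asymptotics MeasureTheory Real Topology

noncomputable section

/-- Matrix exponential over the reals. -/
def mexp {n : ℕ} (A : Matrix (Fin n) (Fin n) ℝ) : Matrix (Fin n) (Fin n) ℝ :=
  NormedSpace.exp A

/-- The softplus function `z ↦ log (1 + e^z)`. -/
def softplus (z : ℝ) : ℝ := Real.log (1 + Real.exp z)

/-- Time-varying linear state recursion: `x 0 = 0`,
`x (k+1) = Abar k *ᵥ x k + u k • Bbar k`.  (Index `k : ℕ` is the 0-based
position of the input, so `x (k+1)` is the state `x_{k+1}` after seeing
inputs `u_1 = u 0, …, u_{k+1} = u k`.) -/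
def tvState {n : ℕ} (Abar : ℕ → Matrix (Fin n) (Fin n) ℝ) (Bbar : ℕ → Fin n → ℝ)
    (u : ℕ → ℝ) : ℕ → Fin n → ℝ
  | 0 => 0
  | k + 1 => (Abar k) *ᵥ (tvState Abar Bbar u k) + u k • Bbar k

/-- Zero-padded extension of a finite scalar sequence `(u_1, …, u_L)`
(`u 0` is `u_1`, …, `u ⟨L-1⟩` is `u_L`). -/
def seq {L : ℕ} (u : Fin L → ℝ) : ℕ → ℝ := fun k => if h : k < L then u ⟨k, h⟩ else 0

/-- Zero-padded extension of a finite vector-valued sequence. -/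
def seqd {L d : ℕ} (u : Fin L → Fin d → ℝ) : ℕ → Fin d → ℝ :=
  fun k => if h : k < L then u ⟨k, h⟩ else 0

/-- The final (`L`-th) output of an S6 unit in which every sampling interval is
forced to equal the constant `Δ`. -/
def s6FinalFixed {n d : ℕ} (A : Matrix (Fin n) (Fin n) ℝ) (Δ : ℝ)
    (B : Matrix (Fin n) (Fin d) ℝ) (C : Matrix (Fin d) (Fin n) ℝ)
    (L : ℕ) (u : ℕ → Fin d → ℝ) (i : Fin d) : ℝ :=
  (u (L - 1) ᵥ* C) ⬝ᵥ
    tvState (fun _ => mexp (Δ • A))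
      (fun k => A⁻¹ *ᵥ ((mexp (Δ • A) - 1) *ᵥ (B *ᵥ u k)))
      (fun k => u k i) L

open Finset

theorem tvState_const_eq_sum {n : ℕ} (Abar : Matrix (Fin n) (Fin n) ℝ) (Bbar : ℕ → Fin n → ℝ)
    (v : ℕ → ℝ) (m : ℕ) :
    tvState (fun _ => Abar) Bbar v m = ∑ k ∈ range m, v k • (Abar ^ (m - 1 - k) *ᵥ Bbar k) := by
  induction m with
  | zero => simp [tvState]
  | succ m ih =>
    rw [tvState, ih, sum_range_succ, mulVec_sum]
    congr 1
    · refine sum_congr rfl fun k hk => ?_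
      have hexp : m + 1 - 1 - k = m - 1 - k + 1 := by have := mem_range.mp hk; omega
      rw [mulVec_smul, mulVec_mulVec, ← pow_succ', hexp]
    · simp

theorem seq_of_lt {L : ℕ} (u : Fin L → ℝ) {k : ℕ} (hk : k < L) : seq u k = u ⟨k, hk⟩ := by
  simp [_root_.seq, hk]

/-- **Quadratic representation of the final output of a single-layer S6 unit on
embedded scalar inputs** (from the proof of Theorem 3.1, part 2).  With all
sampling intervals forced equal to `Δ`, encoder `M`, `Ā = exp(ΔA)`,
`P̄ = A⁻¹(Ā − I)(B M)` and `Q̄ = Mᵀ C`, the `i`-th entry of the final output of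
the S6 unit on the embedded sequence `(u_1 M, …, u_L M)` is
`m^{(i)} · u_L · Σ_{j=1}^L Q̄ Ā^{L−j} P̄ u_j²`; in particular, on sequences with
`u_L = 1` every channel equals `m^{(i)}` times one common quadratic polynomial
of `(u_1, …, u_L)` that does not depend on `i`. -/
theorem s6_final_output_is_quadratic
    (n d L : ℕ) (hL : 0 < L) (Δ : ℝ)
    (A : Matrix (Fin n) (Fin n) ℝ)
    (B : Matrix (Fin n) (Fin d) ℝ) (C : Matrix (Fin d) (Fin n) ℝ)
    (M : Fin d → ℝ) (u : Fin L → ℝ) (i : Fin d) :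
    s6FinalFixed A Δ B C L (fun k => seq u k • M) i =
      M i * u ⟨L - 1, by omega⟩ *
        ∑ j : Fin L,
          ((M ᵥ* C) ⬝ᵥ
              ((mexp (Δ • A)) ^ (L - 1 - (j : ℕ)) *ᵥ
                (A⁻¹ *ᵥ ((mexp (Δ • A) - 1) *ᵥ (B *ᵥ M))))) * (u j) ^ 2 := by
  rw [s6FinalFixed, tvState_const_eq_sum, seq_of_lt u (by omega)]
  set Abar := mexp (Δ • A)
  set Pbar := A⁻¹ *ᵥ ((Abar - 1) *ᵥ (B *ᵥ M))
  -- `u_k` enters both through `B̄_k` and as the channel input `u_k m⁽ⁱ⁾`, hence the square.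
  have hterm : ∀ k, (seq u k • M) i • (Abar ^ (L - 1 - k) *ᵥ
      (A⁻¹ *ᵥ ((Abar - 1) *ᵥ (B *ᵥ (seq u k • M))))) =
      (M i * seq u k ^ 2) • (Abar ^ (L - 1 - k) *ᵥ Pbar) := by
    intro k
    simp only [Pbar, mulVec_smul, Pi.smul_apply, smul_eq_mul, smul_smul]
    congr 1
    ring
  rw [smul_vecMul, smul_dotProduct, dotProduct_sum, smul_eq_mul, mul_sum, mul_sum,
    ← Fin.sum_univ_eq_sum_range]
  refine sum_congr rfl fun j _ => ?_
  rw [hterm, dotProduct_smul, smul_eq_mul, seq_of_lt u j.isLt]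
  ring
end
end

section
/- Homogeneity degrees of parameter gradients (from the proof of Theorem 5.1): Let d = 1, let A ∈ ℝ^{n×n} be diagonal with negative diagonal entries, B ∈ ℝ^{n×1}, C ∈ ℝ^{1×n}, b ∈ ℝ, and set the S6 selection weight w = 0. Then, as functions of the input u ∈ ℝ^L: (i) Γ_S4D(u)_L is homogeneous of degree 1, and so is its partial derivative ∂Γ_S4D(u)_L/∂b; (ii) Γ_S6(u)_L is homogeneous of degree 3; (iii) the partial derivative ∂Γ_S6(u)_L/∂w evaluated at w = 0 is homogeneous of degree 4; and (iv) the partial derivative ∂Γ_S6(u)_L/∂b at w = 0 is homogeneous of degree 3. (A function f is homogeneous of degree m if f(cu) = c^m f(u) for all c > 0.) -/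
open Matrix Filter Asymptotics MeasureTheory Real Topology

noncomputable section

/-- Final output `Γ_S4D(u)_L` of a single-channel (`d = 1`) S4D unit:
`Ā = exp(exp(b) A)`, `B̄ = A⁻¹(Ā − I)B`, `x_k = Ā x_{k-1} + B̄ u_k`, `x_0 = 0`,
`y_k = C x_k`. -/
def s4dScalar {n : ℕ} (A : Matrix (Fin n) (Fin n) ℝ) (B C : Fin n → ℝ) (b : ℝ)
    (L : ℕ) (u : ℕ → ℝ) : ℝ :=
  C ⬝ᵥ tvState (fun _ => mexp (Real.exp b • A))
      (fun _ => A⁻¹ *ᵥ ((mexp (Real.exp b • A) - 1) *ᵥ B)) u L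

/-- Final output `Γ_S6(u)_L` of a single-channel (`d = 1`) S6 unit:
`Δ_k = softplus(w u_k + b)`, `Ā_k = exp(Δ_k A)`, `B̄_k = A⁻¹(Ā_k − I)B u_k`,
`x_k = Ā_k x_{k-1} + B̄_k u_k`, `x_0 = 0`, `y_k = (u_k C) x_k`. -/
def s6Scalar {n : ℕ} (A : Matrix (Fin n) (Fin n) ℝ) (B C : Fin n → ℝ) (w b : ℝ)
    (L : ℕ) (u : ℕ → ℝ) : ℝ :=
  u (L - 1) *
    (C ⬝ᵥ tvState (fun k => mexp (softplus (w * u k + b) • A))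
        (fun k => u k • (A⁻¹ *ᵥ ((mexp (softplus (w * u k + b) • A) - 1) *ᵥ B))) u L)

/-!
The state `x_k` is linear in the input sequence and, separately, in the gains `B̄_k`. In S4D
the transition matrices do not depend on the input, so scaling `u` by `c` scales the output by
`c`. In S6 the input enters `Δ_k` only through `w * u_k`, so scaling `u` by `c` is the same as
scaling `w` by `c` while the gains `B̄_k ∝ u_k`, the input and the readout factor `u_L` each
contribute a factor `c`: degree 3, with `w` replaced by `c * w`. Derivatives in `b` keep these
degrees, and at `w = 0` the chain rule contributes one more factor `c` to the `w`-derivative.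
-/

variable {n : ℕ}

theorem tvState_smul_input (Abar : ℕ → Matrix (Fin n) (Fin n) ℝ) (Bbar : ℕ → Fin n → ℝ)
    (u : ℕ → ℝ) (c : ℝ) (m : ℕ) : tvState Abar Bbar (c • u) m = c • tvState Abar Bbar u m := by
  induction m with
  | zero => simp [tvState]
  | succ k ih => simp only [tvState, ih, mulVec_smul, smul_add, Pi.smul_apply, smul_eq_mul,
      mul_smul]

theorem tvState_smul_gain (Abar : ℕ → Matrix (Fin n) (Fin n) ℝ) (Bbar : ℕ → Fin n → ℝ)
    (u : ℕ → ℝ) (a : ℝ) (m : ℕ) : tvState Abar (a • Bbar) u m = a • tvState Abar Bbar u m := by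
  induction m with
  | zero => simp [tvState]
  | succ k ih => simp only [tvState, ih, mulVec_smul, smul_add, Pi.smul_apply, smul_comm a]

theorem tvState_smul_input_gain (Abar : ℕ → Matrix (Fin n) (Fin n) ℝ) (G : ℕ → Fin n → ℝ)
    (u : ℕ → ℝ) (c : ℝ) (m : ℕ) :
    tvState Abar (fun k => (c • u) k • G k) (c • u) m
      = (c * c) • tvState Abar (fun k => u k • G k) u m := by
  have hgain : (fun k => (c • u) k • G k) = c • fun k => u k • G k := by
    funext k
    simp only [Pi.smul_apply, smul_eq_mul, mul_smul]
  rw [hgain, tvState_smul_gain, tvState_smul_input, smul_smul]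

theorem seq_smul {L : ℕ} (c : ℝ) (u : Fin L → ℝ) : seq (c • u) = c • seq u := by
  funext k
  by_cases hk : k < L <;> simp [_root_.seq, hk]

theorem s4dScalar_smul (A : Matrix (Fin n) (Fin n) ℝ) (B C : Fin n → ℝ) (b : ℝ) (L : ℕ)
    (c : ℝ) (u : ℕ → ℝ) : s4dScalar A B C b L (c • u) = c * s4dScalar A B C b L u := by
  simp only [s4dScalar, tvState_smul_input, dotProduct_smul, smul_eq_mul]

theorem s6Scalar_smul (A : Matrix (Fin n) (Fin n) ℝ) (B C : Fin n → ℝ) (w b : ℝ) (L : ℕ)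
    (c : ℝ) (u : ℕ → ℝ) :
    s6Scalar A B C w b L (c • u) = c ^ 3 * s6Scalar A B C (c * w) b L u := by
  have hstep (k : ℕ) : w * (c • u) k + b = c * w * u k + b := by
    simp only [Pi.smul_apply, smul_eq_mul]; ring
  simp only [s6Scalar, hstep, tvState_smul_input_gain]
  simp only [dotProduct_smul, Pi.smul_apply, smul_eq_mul]
  ring

theorem s6_s4d_gradient_homogeneity_general
    (n L : ℕ)
    (A : Matrix (Fin n) (Fin n) ℝ)
    (B C : Fin n → ℝ) (b : ℝ) :
    (∀ c : ℝ, 0 < c → ∀ u : Fin L → ℝ,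
        s4dScalar A B C b L (seq (c • u)) = c ^ 1 * s4dScalar A B C b L (seq u)) ∧
    (∀ c : ℝ, 0 < c → ∀ u : Fin L → ℝ,
        deriv (fun b' => s4dScalar A B C b' L (seq (c • u))) b =
          c ^ 1 * deriv (fun b' => s4dScalar A B C b' L (seq u)) b) ∧
    (∀ c : ℝ, 0 < c → ∀ u : Fin L → ℝ,
        s6Scalar A B C 0 b L (seq (c • u)) = c ^ 3 * s6Scalar A B C 0 b L (seq u)) ∧
    (∀ c : ℝ, 0 < c → ∀ u : Fin L → ℝ,
        deriv (fun w => s6Scalar A B C w b L (seq (c • u))) 0 =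
          c ^ 4 * deriv (fun w => s6Scalar A B C w b L (seq u)) 0) ∧
    (∀ c : ℝ, 0 < c → ∀ u : Fin L → ℝ,
        deriv (fun b' => s6Scalar A B C 0 b' L (seq (c • u))) b =
          c ^ 3 * deriv (fun b' => s6Scalar A B C 0 b' L (seq u)) b) := by
  refine ⟨fun c _ u => ?_, fun c _ u => ?_, fun c _ u => ?_, fun c _ u => ?_, fun c _ u => ?_⟩
  · rw [seq_smul, s4dScalar_smul, pow_one]
  · simp only [seq_smul, s4dScalar_smul, deriv_const_mul_field, pow_one]
  · rw [seq_smul, s6Scalar_smul, mul_zero]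
  · simp only [seq_smul, s6Scalar_smul, deriv_const_mul_field]
    rw [deriv_comp_mul_left (f := fun w => s6Scalar A B C w b L (seq u)), mul_zero, smul_eq_mul]
    ring
  · simp only [seq_smul, s6Scalar_smul, mul_zero, deriv_const_mul_field]

/-- **Homogeneity degrees of parameter gradients** (from the proof of
Theorem 5.1).  Let `d = 1`, `A` diagonal with negative diagonal entries, and
`w = 0`.  As functions of the input `u`: (i) `Γ_S4D(u)_L` and `∂Γ_S4D(u)_L/∂b`
are homogeneous of degree 1; (ii) `Γ_S6(u)_L` is homogeneous of degree 3;
(iii) `∂Γ_S6(u)_L/∂w` at `w = 0` is homogeneous of degree 4; and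
(iv) `∂Γ_S6(u)_L/∂b` at `w = 0` is homogeneous of degree 3. -/
theorem s6_s4d_gradient_homogeneity
    (n L : ℕ) (hn : 1 ≤ n) (hL : 1 ≤ L)
    (A : Matrix (Fin n) (Fin n) ℝ)
    (hAdiag : ∀ i j : Fin n, i ≠ j → A i j = 0) (hAneg : ∀ i : Fin n, A i i < 0)
    (B C : Fin n → ℝ) (b : ℝ) :
    (∀ c : ℝ, 0 < c → ∀ u : Fin L → ℝ,
        s4dScalar A B C b L (seq (c • u)) = c ^ 1 * s4dScalar A B C b L (seq u)) ∧
    (∀ c : ℝ, 0 < c → ∀ u : Fin L → ℝ,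
        deriv (fun b' => s4dScalar A B C b' L (seq (c • u))) b =
          c ^ 1 * deriv (fun b' => s4dScalar A B C b' L (seq u)) b) ∧
    (∀ c : ℝ, 0 < c → ∀ u : Fin L → ℝ,
        s6Scalar A B C 0 b L (seq (c • u)) = c ^ 3 * s6Scalar A B C 0 b L (seq u)) ∧
    (∀ c : ℝ, 0 < c → ∀ u : Fin L → ℝ,
        deriv (fun w => s6Scalar A B C w b L (seq (c • u))) 0 =
          c ^ 4 * deriv (fun w => s6Scalar A B C w b L (seq u)) 0) ∧
    (∀ c : ℝ, 0 < c → ∀ u : Fin L → ℝ,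
        deriv (fun b' => s6Scalar A B C 0 b' L (seq (c • u))) b =
          c ^ 3 * deriv (fun b' => s6Scalar A B C 0 b' L (seq u)) b) :=
  s6_s4d_gradient_homogeneity_general n L A B C b
end
end
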